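/- Let R = diag(1, −1) be reflection across the horizontal axis in ℝ². Then for all v, w ∈ ℝ², α_λ(R·v, R·w) = α_λ(v,w) and R · M_λ(v,w) = M_{−λ}(R·v, R·w) · R. Consequently, if K : (ℝ²)⁴ → ℝ² is R-equivariant, i.e. K(R·x, R·y, R·v, R·w) = R·K(x,y,v,w), and u is R-equivariant, i.e. u(R·x, R·v) = R·u(x,v), and (x_i, v_i)_{i=1..N} solves the anisotropic system with parameter λ, then the reflected trajectories (R·x_i, R·v_i)_{i=1..N} solve the anisotropic system with parameter −λ. (This expresses that changing the sign of λ interchanges the roles of the two groups under reflection, i.e. 'right-before-left' becomes 'left-before-right'.) -/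

import Mathlib

open Real MeasureTheory
open scoped Classical

noncomputable section

/-- The plane `ℝ²` with the Euclidean norm. -/
abbrev E2 : Type := EuclideanSpace ℝ (Fin 2)

/-- Interaction angle `α_λ(v,w)` with anisotropy parameter `λ`:
`α = λ · arccos (v⬝w / (‖v‖‖w‖))` if `v ≠ 0` and `w ≠ 0`, and `0` otherwise. -/
def iangle (lam : ℝ) (v w : E2) : ℝ :=
  if v ≠ 0 ∧ w ≠ 0 then lam * Real.arccos ((inner ℝ v w : ℝ) / (‖v‖ * ‖w‖)) else 0

/-- Rotation matrix `M_λ(v,w) = [[cos α, -sin α], [sin α, cos α]]`. -/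
def rotM (lam : ℝ) (v w : E2) : Matrix (Fin 2) (Fin 2) ℝ :=
  !![Real.cos (iangle lam v w), -Real.sin (iangle lam v w);
     Real.sin (iangle lam v w), Real.cos (iangle lam v w)]

/-- Apply a 2×2 matrix to a vector of `ℝ²`. -/
def apply2 (M : Matrix (Fin 2) (Fin 2) ℝ) (z : E2) : E2 :=
  Matrix.toEuclideanLin M z

/-- Reflection across the horizontal axis, `R = diag(1,-1)`. -/
def Rrefl : Matrix (Fin 2) (Fin 2) ℝ := !![1, 0; 0, -1]

/-! `R` is orthogonal, so it preserves the inner products and norms from which `α_λ` is built,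
and it reverses orientation, so `R · rot θ = rot (-θ) · R`; as `-α_λ = α_{-λ}`, this gives
`R · M_λ(v,w) = M_{-λ}(Rv,Rw) · R`. Applying the linear map `R` to the equations of motion and
using the equivariance of `u` and `K` then turns the system with parameter `λ` into the one
with parameter `-λ`. -/

lemma apply2_Rrefl_apply_zero (z : E2) : apply2 Rrefl z 0 = z 0 := by
  simp [apply2, Rrefl, Matrix.mulVec, dotProduct, Fin.sum_univ_two]

lemma apply2_Rrefl_apply_one (z : E2) : apply2 Rrefl z 1 = -z 1 := by
  simp [apply2, Rrefl, Matrix.mulVec, dotProduct, Fin.sum_univ_two]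

def reflIsometry : E2 →ₗᵢ[ℝ] E2 where
  toLinearMap := Matrix.toEuclideanLin Rrefl
  norm_map' z := by
    change ‖apply2 Rrefl z‖ = ‖z‖
    simp [EuclideanSpace.norm_eq, Fin.sum_univ_two, apply2_Rrefl_apply_zero,
      apply2_Rrefl_apply_one]

lemma reflIsometry_apply (z : E2) : reflIsometry z = apply2 Rrefl z := rfl

lemma iangle_map (f : E2 →ₗᵢ[ℝ] E2) (lam : ℝ) (v w : E2) :
    iangle lam (f v) (f w) = iangle lam v w := by
  simp only [iangle, f.inner_map_map, f.norm_map, ne_eq, map_eq_zero_iff f f.injective]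

lemma iangle_neg (lam : ℝ) (v w : E2) : iangle (-lam) v w = -iangle lam v w := by
  unfold iangle
  split_ifs <;> ring

lemma Rrefl_mul_rotation (θ : ℝ) :
    Rrefl * !![cos θ, -sin θ; sin θ, cos θ]
      = !![cos (-θ), -sin (-θ); sin (-θ), cos (-θ)] * Rrefl := by
  simp [Rrefl]

lemma Rrefl_mul_rotM (lam : ℝ) (v w : E2) :
    Rrefl * rotM lam v w = rotM (-lam) (apply2 Rrefl v) (apply2 Rrefl w) * Rrefl := by
  rw [rotM, rotM, ← reflIsometry_apply, ← reflIsometry_apply, iangle_neg, iangle_map, Rrefl_mul_rotation]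

lemma apply2_mul (A B : Matrix (Fin 2) (Fin 2) ℝ) (z : E2) :
    apply2 (A * B) z = apply2 A (apply2 B z) := by
  simp [apply2]

def interactionField (lam : ℝ) (u : E2 → E2 → E2) (K : E2 → E2 → E2 → E2 → E2) {N : ℕ}
    (x v : Fin N → E2) (i : Fin N) : E2 :=
  u (x i) (v i) - (N : ℝ)⁻¹ • ∑ j ∈ Finset.univ.erase i,
    apply2 (rotM lam (v i) (v j)) (K (x i) (x j) (v i) (v j))

lemma apply2_Rrefl_interactionField (lam : ℝ) {u : E2 → E2 → E2}
    {K : E2 → E2 → E2 → E2 → E2}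
    (hK : ∀ x y v w : E2,
      K (apply2 Rrefl x) (apply2 Rrefl y) (apply2 Rrefl v) (apply2 Rrefl w)
        = apply2 Rrefl (K x y v w))
    (hu : ∀ x v : E2, u (apply2 Rrefl x) (apply2 Rrefl v) = apply2 Rrefl (u x v))
    {N : ℕ} (x v : Fin N → E2) (i : Fin N) :
    apply2 Rrefl (interactionField lam u K x v i)
      = interactionField (-lam) u K (apply2 Rrefl ∘ x) (apply2 Rrefl ∘ v) i := by
  simp only [interactionField, ← reflIsometry_apply, map_sub, map_smul, map_sum, Function.comp_apply]
  simp only [reflIsometry_apply, hu, hK, ← apply2_mul, Rrefl_mul_rotM]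

lemma HasDerivAt.apply2_Rrefl {γ : ℝ → E2} {γ' : E2} {t : ℝ} (h : HasDerivAt γ γ' t) :
    HasDerivAt (fun s => apply2 Rrefl (γ s)) (apply2 Rrefl γ') t :=
  reflIsometry.toContinuousLinearMap.hasFDerivAt.comp_hasDerivAt t h

theorem stmt_8_general (lam : ℝ) (N : ℕ) (u : E2 → E2 → E2) (K : E2 → E2 → E2 → E2 → E2)
    (hK : ∀ x y v w : E2,
      K (apply2 Rrefl x) (apply2 Rrefl y) (apply2 Rrefl v) (apply2 Rrefl w)
        = apply2 Rrefl (K x y v w))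
    (hu : ∀ x v : E2, u (apply2 Rrefl x) (apply2 Rrefl v) = apply2 Rrefl (u x v))
    (x v : Fin N → ℝ → E2)
    (hx : ∀ i t, HasDerivAt (x i) (v i t) t)
    (hv : ∀ i t, HasDerivAt (v i)
      (u (x i t) (v i t) - (N : ℝ)⁻¹ • ∑ j ∈ Finset.univ.erase i,
        apply2 (rotM lam (v i t) (v j t)) (K (x i t) (x j t) (v i t) (v j t))) t) :
    (∀ vv ww : E2,
      iangle lam (apply2 Rrefl vv) (apply2 Rrefl ww) = iangle lam vv ww) ∧
    (∀ vv ww : E2,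
      Rrefl * rotM lam vv ww = rotM (-lam) (apply2 Rrefl vv) (apply2 Rrefl ww) * Rrefl) ∧
    (∀ i t, HasDerivAt (fun s => apply2 Rrefl (x i s)) (apply2 Rrefl (v i t)) t) ∧
    (∀ i t, HasDerivAt (fun s => apply2 Rrefl (v i s))
      (u (apply2 Rrefl (x i t)) (apply2 Rrefl (v i t)) -
        (N : ℝ)⁻¹ • ∑ j ∈ Finset.univ.erase i,
          apply2 (rotM (-lam) (apply2 Rrefl (v i t)) (apply2 Rrefl (v j t)))
            (K (apply2 Rrefl (x i t)) (apply2 Rrefl (x j t))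
               (apply2 Rrefl (v i t)) (apply2 Rrefl (v j t)))) t) := by
  refine ⟨iangle_map reflIsometry lam, Rrefl_mul_rotM lam, fun i t => (hx i t).apply2_Rrefl,
    fun i t => ?_⟩
  have h : HasDerivAt (fun s => apply2 Rrefl (v i s))
      (apply2 Rrefl (interactionField lam u K (x · t) (v · t) i)) t :=
    (hv i t).apply2_Rrefl
  rwa [apply2_Rrefl_interactionField lam hK hu] at h

/-- Reflection invariance of the angle, intertwining relation `R·M_λ(v,w) = M_{-λ}(Rv,Rw)·R`,
and: reflected trajectories of a solution with parameter `λ` solve the system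
with parameter `-λ` (for `R`-equivariant `u` and `K`). -/
theorem stmt_8 (lam : ℝ) (hlam : lam ∈ Set.Icc (-1 : ℝ) 1)
    (N : ℕ) (u : E2 → E2 → E2) (K : E2 → E2 → E2 → E2 → E2)
    (hK : ∀ x y v w : E2,
      K (apply2 Rrefl x) (apply2 Rrefl y) (apply2 Rrefl v) (apply2 Rrefl w)
        = apply2 Rrefl (K x y v w))
    (hu : ∀ x v : E2, u (apply2 Rrefl x) (apply2 Rrefl v) = apply2 Rrefl (u x v))
    (x v : Fin N → ℝ → E2)
    (hx : ∀ i t, HasDerivAt (x i) (v i t) t)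
    (hv : ∀ i t, HasDerivAt (v i)
      (u (x i t) (v i t) - (N : ℝ)⁻¹ • ∑ j ∈ Finset.univ.erase i,
        apply2 (rotM lam (v i t) (v j t)) (K (x i t) (x j t) (v i t) (v j t))) t) :
    (∀ vv ww : E2,
      iangle lam (apply2 Rrefl vv) (apply2 Rrefl ww) = iangle lam vv ww) ∧
    (∀ vv ww : E2,
      Rrefl * rotM lam vv ww = rotM (-lam) (apply2 Rrefl vv) (apply2 Rrefl ww) * Rrefl) ∧
    (∀ i t, HasDerivAt (fun s => apply2 Rrefl (x i s)) (apply2 Rrefl (v i t)) t) ∧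
    (∀ i t, HasDerivAt (fun s => apply2 Rrefl (v i s))
      (u (apply2 Rrefl (x i t)) (apply2 Rrefl (v i t)) -
        (N : ℝ)⁻¹ • ∑ j ∈ Finset.univ.erase i,
          apply2 (rotM (-lam) (apply2 Rrefl (v i t)) (apply2 Rrefl (v j t)))
            (K (apply2 Rrefl (x i t)) (apply2 Rrefl (x j t))
               (apply2 Rrefl (v i t)) (apply2 Rrefl (v j t)))) t) :=
  stmt_8_general lam N u K hK hu x v hx hv
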